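/- Let γ > 0 and let q ∈ L¹(ℝ;ℂ) with supp q ⊆ [0,γ]. Then for every λ ∈ ℂ with ε = Im λ, the function a satisfies |a(λ) − 1| ≤ exp(γ(|ε| − ε))·(cosh(‖q‖₁) − 1), where ‖q‖₁ = ∫_ℝ |q(x)| dx. -/

import Mathlib

open MeasureTheory Complex Real Filter

/-- The `n`-th simplex integral `a_n(λ)` in the iteration series for the inverse
transmission coefficient of the 1D massless Dirac operator with potential `q`. -/
noncomputable def aCoeff (γ : ℝ) (q : ℝ → ℂ) (n : ℕ) (l : ℂ) : ℂ :=
  ∫ t : Fin (2 * n) → ℝ in {t | StrictMono t ∧ ∀ i, t i ∈ Set.Ioo 0 γ},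
    ∏ j : Fin n,
      q (t ⟨2 * (j : ℕ), by have := j.isLt; omega⟩) *
        (starRingEnd ℂ) (q (t ⟨2 * (j : ℕ) + 1, by have := j.isLt; omega⟩)) *
        Complex.exp (2 * Complex.I * l *
          (((t ⟨2 * (j : ℕ) + 1, by have := j.isLt; omega⟩) : ℝ)
            - (t ⟨2 * (j : ℕ), by have := j.isLt; omega⟩)))

/-- The function `a(λ) = 1 + Σ_{n≥1} a_n(λ)`. -/
noncomputable def diracA (γ : ℝ) (q : ℝ → ℂ) (l : ℂ) : ℂ :=
  1 + ∑' n : ℕ, aCoeff γ q (n + 1) l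

/-! The integrand of `a_n(λ)` has modulus `e^{-2εD} ∏ |q(tᵢ)|`, where `D = Σⱼ (t_{2j} - t_{2j-1})`
is the total length of disjoint subintervals of `(0, γ)`; hence `0 ≤ D ≤ γ` and
`e^{-2εD} ≤ e^{γ(|ε| - ε)}`. The `(2n)!` cells `{t ∘ σ strictly increasing}` are disjoint
congruent copies of the simplex, so the simplex integral of `∏ |q(tᵢ)|` is at most
`‖q‖₁^{2n} / (2n)!`. Summing over `n ≥ 1` leaves the even part of the exponential series without
its constant term, `cosh ‖q‖₁ - 1`. -/

section Simplex

variable {k : ℕ}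

lemma Tuple.eq_sort_of_strictMono_comp {α : Type*} [LinearOrder α] {f : Fin k → α}
    {σ : Equiv.Perm (Fin k)} (h : StrictMono (f ∘ σ)) : σ = Tuple.sort f :=
  Tuple.eq_sort_iff.2 ⟨h.monotone, fun _ _ hij heq => absurd heq (h hij).ne⟩

lemma measurableSet_setOf_strictMono_comp (σ : Equiv.Perm (Fin k)) :
    MeasurableSet {t : Fin k → ℝ | StrictMono (t ∘ σ)} := by
  simp only [StrictMono, Function.comp_apply, Set.ofPred_forall]
  exact .iInter fun i => .iInter fun j => .iInter fun _ =>
    measurableSet_lt (measurable_pi_apply _) (measurable_pi_apply _)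

lemma measurableSet_simplex (γ : ℝ) :
    MeasurableSet {t : Fin k → ℝ | StrictMono t ∧ ∀ i, t i ∈ Set.Ioo 0 γ} := by
  rw [Set.ofPred_and, Set.ofPred_forall]
  exact (measurableSet_setOf_strictMono_comp 1).inter
    (.iInter fun i => measurable_pi_apply i measurableSet_Ioo)

lemma setIntegral_strictMono_comp_perm {E : Type*} [NormedAddCommGroup E] [NormedSpace ℝ E]
    (μ : Measure ℝ) [SigmaFinite μ] {F : (Fin k → ℝ) → E}
    (hF : ∀ t (σ : Equiv.Perm (Fin k)), F (t ∘ σ) = F t) (σ : Equiv.Perm (Fin k)) :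
    ∫ t in {t | StrictMono (t ∘ σ)}, F t ∂Measure.pi (fun _ => μ)
      = ∫ t in {t | StrictMono t}, F t ∂Measure.pi (fun _ => μ) := by
  have hcomp : ∀ t, MeasurableEquiv.piCongrLeft (fun _ => ℝ) σ.symm t = t ∘ σ := fun t => by
    ext i
    simpa using MeasurableEquiv.piCongrLeft_apply_apply (β := fun _ => ℝ) σ.symm t (σ i)
  have hpre : MeasurableEquiv.piCongrLeft (fun _ => ℝ) σ.symm ⁻¹' {t | StrictMono t}
      = {t | StrictMono (t ∘ σ)} := by
    ext t
    simp [hcomp]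
  have h := (measurePreserving_piCongrLeft (fun _ : Fin k => μ) σ.symm).setIntegral_preimage_emb
    (MeasurableEquiv.measurableEmbedding _) F {t | StrictMono t}
  simpa only [hpre, hcomp, hF] using h

theorem factorial_mul_setIntegral_strictMono_le (μ : Measure ℝ) [SigmaFinite μ] {g : ℝ → ℝ}
    (hg0 : 0 ≤ g) (hg : Integrable g μ) :
    k.factorial * ∫ t in {t : Fin k → ℝ | StrictMono t}, ∏ i, g (t i) ∂Measure.pi (fun _ => μ)
      ≤ (∫ x, g x ∂μ) ^ k := by
  set ν := Measure.pi fun _ : Fin k => μ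
  set F : (Fin k → ℝ) → ℝ := fun t => ∏ i, g (t i)
  set cell : Equiv.Perm (Fin k) → Set (Fin k → ℝ) := fun σ => {t | StrictMono (t ∘ σ)}
  have hFint : Integrable F ν := Integrable.fintype_prod fun _ => hg
  have hdisj : Pairwise (Function.onFun Disjoint cell) := fun σ τ hne =>
    Set.disjoint_left.2 fun t hσ hτ =>
      hne ((Tuple.eq_sort_of_strictMono_comp hσ).trans (Tuple.eq_sort_of_strictMono_comp hτ).symm)
  calc k.factorial * ∫ t in {t | StrictMono t}, F t ∂ν
      = ∑ σ, ∫ t in cell σ, F t ∂ν := by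
        rw [Finset.sum_congr rfl fun σ _ => setIntegral_strictMono_comp_perm μ
          (fun t σ => Equiv.prod_comp σ fun i => g (t i)) σ, Finset.sum_const, Finset.card_univ,
          Fintype.card_perm, Fintype.card_fin, nsmul_eq_mul]
    _ = ∫ t in ⋃ σ, cell σ, F t ∂ν :=
        (integral_iUnion_fintype measurableSet_setOf_strictMono_comp hdisj
          fun _ => hFint.integrableOn).symm
    _ ≤ ∫ t, F t ∂ν :=
        setIntegral_le_integral hFint (ae_of_all _ fun t => Finset.prod_nonneg fun i _ => hg0 _)
    _ = (∫ x, g x ∂μ) ^ k := by rw [integral_fintype_prod_eq_pow, Fintype.card_fin]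

end Simplex

namespace Fin

variable {n : ℕ}

-- 0-based: `evenIdx j` and `oddIdx j` are the paper's indices `2j - 1` and `2j` for `j + 1`.
def evenIdx (j : Fin n) : Fin (2 * n) := ⟨2 * j, by omega⟩

def oddIdx (j : Fin n) : Fin (2 * n) := ⟨2 * j + 1, by omega⟩

lemma prod_univ_two_mul {M : Type*} [CommMonoid M] (f : Fin (2 * n) → M) :
    ∏ i, f i = ∏ j : Fin n, f j.evenIdx * f j.oddIdx := by
  rw [← (finProdFinEquiv.trans (finCongr (mul_comm n 2))).prod_comp, Fintype.prod_prod_type]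
  refine Finset.prod_congr rfl fun j _ => ?_
  rw [Fin.prod_univ_two]
  congr 2 <;> ext <;> simp [evenIdx, oddIdx]; ring

lemma sum_oddIdx_sub_evenIdx_le {t : Fin (2 * n) → ℝ} {a b : ℝ} (ht : Monotone t)
    (hmem : ∀ i, t i ∈ Set.Icc a b) (hab : a ≤ b) :
    ∑ j : Fin n, (t j.oddIdx - t j.evenIdx) ≤ b - a := by
  induction n generalizing b with
  | zero => simpa using hab
  | succ n ih =>
    have hinit := ih (t := fun i => t (Fin.castLE (by omega) i)) (b := t (last n).evenIdx)
      (fun i j hij => ht hij) (fun i => ⟨(hmem _).1, ht (Fin.mk_le_mk.2 (by simp))⟩)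
      (hmem _).1
    have hend := (hmem (last n).oddIdx).2
    rw [Fin.sum_univ_castSucc]
    exact (add_le_add hinit le_rfl).trans (by linarith)

end Fin

section Integrand

variable {n : ℕ}

noncomputable def aIntegrand (q : ℝ → ℂ) (l : ℂ) (t : Fin (2 * n) → ℝ) : ℂ :=
  ∏ j : Fin n, q (t j.evenIdx) * starRingEnd ℂ (q (t j.oddIdx)) *
    Complex.exp (2 * I * l * (t j.oddIdx - t j.evenIdx))

lemma aCoeff_eq_setIntegral (γ : ℝ) (q : ℝ → ℂ) (l : ℂ) :
    aCoeff γ q n l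
      = ∫ t in {t : Fin (2 * n) → ℝ | StrictMono t ∧ ∀ i, t i ∈ Set.Ioo 0 γ}, aIntegrand q l t :=
  rfl

lemma norm_aIntegrand (q : ℝ → ℂ) (l : ℂ) (t : Fin (2 * n) → ℝ) :
    ‖aIntegrand q l t‖
      = Real.exp (-(2 * l.im * ∑ j : Fin n, (t j.oddIdx - t j.evenIdx))) * ∏ i, ‖q (t i)‖ := by
  have hfactor : ∀ j : Fin n, ‖q (t j.evenIdx) * starRingEnd ℂ (q (t j.oddIdx)) *
      Complex.exp (2 * I * l * (t j.oddIdx - t j.evenIdx))‖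
      = Real.exp (-(2 * l.im * (t j.oddIdx - t j.evenIdx)))
        * (‖q (t j.evenIdx)‖ * ‖q (t j.oddIdx)‖) := fun j => by
    rw [norm_mul, norm_mul, RCLike.norm_conj, Complex.norm_exp, mul_comm]
    congr 2
    simp
  rw [aIntegrand, norm_prod, Finset.prod_congr rfl fun j _ => hfactor j, Finset.prod_mul_distrib,
    ← Real.exp_sum, Finset.mul_sum, ← Finset.sum_neg_distrib, Fin.prod_univ_two_mul]

lemma neg_two_mul_mul_le {ε D γ : ℝ} (hD : 0 ≤ D) (hDγ : D ≤ γ) :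
    -(2 * ε * D) ≤ γ * (|ε| - ε) := by
  rcases abs_cases ε with ⟨h, hε⟩ | ⟨h, hε⟩ <;> rw [h] <;> nlinarith

lemma norm_aIntegrand_le {γ : ℝ} (hγ : 0 ≤ γ) (q : ℝ → ℂ) (l : ℂ) {t : Fin (2 * n) → ℝ}
    (ht : Monotone t) (hmem : ∀ i, t i ∈ Set.Icc 0 γ) :
    ‖aIntegrand q l t‖ ≤ Real.exp (γ * (|l.im| - l.im)) * ∏ i, ‖q (t i)‖ := by
  rw [norm_aIntegrand]
  gcongr
  refine neg_two_mul_mul_le (Finset.sum_nonneg fun j _ => sub_nonneg.2 (ht ?_)) ?_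
  · simp [Fin.le_def, Fin.evenIdx, Fin.oddIdx]
  · simpa using Fin.sum_oddIdx_sub_evenIdx_le ht hmem hγ

end Integrand

lemma norm_aCoeff_le {γ : ℝ} (hγ : 0 ≤ γ) {q : ℝ → ℂ} (hq : Integrable q) (n : ℕ) (l : ℂ) :
    ‖aCoeff γ q n l‖
      ≤ Real.exp (γ * (|l.im| - l.im)) * ((∫ x, ‖q x‖) ^ (2 * n) / (2 * n).factorial) := by
  set S := {t : Fin (2 * n) → ℝ | StrictMono t ∧ ∀ i, t i ∈ Set.Ioo 0 γ}
  set C := Real.exp (γ * (|l.im| - l.im))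
  have hG : Integrable (fun t : Fin (2 * n) → ℝ => ∏ i, ‖q (t i)‖) :=
    Integrable.fintype_prod fun _ => hq.norm
  have hbound : ∀ t ∈ S, ‖aIntegrand q l t‖ ≤ C * ∏ i, ‖q (t i)‖ := fun t ht =>
    norm_aIntegrand_le hγ q l ht.1.monotone fun i => Set.Ioo_subset_Icc_self (ht.2 i)
  calc ‖aCoeff γ q n l‖
      ≤ ∫ t in S, C * ∏ i, ‖q (t i)‖ := by
        rw [aCoeff_eq_setIntegral]
        exact norm_integral_le_of_norm_le (hG.const_mul C).integrableOn
          ((ae_restrict_iff' (measurableSet_simplex γ)).2 (ae_of_all _ hbound))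
    _ = C * ∫ t in S, ∏ i, ‖q (t i)‖ := integral_const_mul C _
    _ ≤ C * ∫ t in {t | StrictMono t}, ∏ i, ‖q (t i)‖ := by
        refine mul_le_mul_of_nonneg_left ?_ (Real.exp_pos _).le
        exact setIntegral_mono_set hG.integrableOn
          (ae_of_all _ fun t => Finset.prod_nonneg fun i _ => norm_nonneg _)
          (ae_of_all _ fun t (ht : t ∈ S) => ht.1)
    _ ≤ C * ((∫ x, ‖q x‖) ^ (2 * n) / (2 * n).factorial) := by
        gcongr
        rw [le_div_iff₀ (by positivity), mul_comm]
        exact factorial_mul_setIntegral_strictMono_le volume (fun x => norm_nonneg (q x)) hq.norm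

lemma Real.hasSum_cosh_sub_one (x : ℝ) :
    HasSum (fun m : ℕ => x ^ (2 * (m + 1)) / (2 * (m + 1)).factorial) (Real.cosh x - 1) := by
  simpa using (hasSum_nat_add_iff' 1).2 (Real.hasSum_cosh x)

theorem diracA_sub_one_bound_general (γ : ℝ) (hγ : 0 < γ) (q : ℝ → ℂ)
    (hq : Integrable q) (l : ℂ) :
    ‖diracA γ q l - 1‖ ≤
      Real.exp (γ * (|l.im| - l.im)) * (Real.cosh (∫ x : ℝ, ‖q x‖) - 1) := by
  rw [diracA, add_sub_cancel_left]
  exact tsum_of_norm_bounded ((Real.hasSum_cosh_sub_one _).mul_left _)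
    fun m => norm_aCoeff_le hγ.le hq (m + 1) l

/-- Bound on `a − 1`: `|a(λ) − 1| ≤ exp(γ(|ε| − ε))·(cosh(‖q‖₁) − 1)` where `ε = Im λ`. -/
theorem diracA_sub_one_bound (γ : ℝ) (hγ : 0 < γ) (q : ℝ → ℂ)
    (hq : Integrable q) (hsupp : Function.support q ⊆ Set.Icc 0 γ) (l : ℂ) :
    ‖diracA γ q l - 1‖ ≤
      Real.exp (γ * (|l.im| - l.im)) * (Real.cosh (∫ x : ℝ, ‖q x‖) - 1) :=
  diracA_sub_one_bound_general γ hγ q hq l
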